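/- The function d_𝕃(x,y) = cosh⁻¹(-⟨x,y⟩_L) defines a metric on 𝕃ⁿ (it is nonnegative, zero iff x = y, symmetric, and satisfies the triangle inequality). -/

import Mathlib

open Matrix BigOperators Real

noncomputable section

/-- Lorentzian inner product on ℝ^{n+1}. -/
def lprod {n : ℕ} (x y : Fin (n + 1) → ℝ) : ℝ :=
  ∑ i, (if i = 0 then (-1 : ℝ) else 1) * x i * y i

/-- The hyperboloid model 𝕃ⁿ ⊂ ℝ^{n+1}. -/
def Hyp (n : ℕ) : Set (Fin (n + 1) → ℝ) := {x | lprod x x = -1 ∧ 0 < x 0}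

/-- J = diag(-1, Iₙ). -/
def Jmat (n : ℕ) : Matrix (Fin (n + 1)) (Fin (n + 1)) ℝ :=
  Matrix.diagonal (fun i => if i = 0 then (-1 : ℝ) else 1)

/-- Inverse hyperbolic cosine. -/
def arcosh (t : ℝ) : ℝ := Real.log (t + Real.sqrt (t ^ 2 - 1))

/-- Geodesic distance on the hyperboloid. -/
def dL {n : ℕ} (x y : Fin (n + 1) → ℝ) : ℝ := _root_.arcosh (-(lprod x y))

/-! Points of `𝕃ⁿ` are unit timelike vectors, so the Lorentz form is positive definite on the
orthogonal complement `y⊥` of any `y ∈ 𝕃ⁿ`.  Projecting onto `y⊥` and applying Cauchy–Schwarz there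
gives both the reverse Cauchy–Schwarz inequality `-⟨x, y⟩_L ≥ 1` (with equality only for `x = y`)
and, for `a = -⟨x, y⟩_L`, `b = -⟨y, z⟩_L`, `c = -⟨x, z⟩_L`, the bound
`c ≤ ab + √(a² - 1) √(b² - 1) = cosh (arcosh a + arcosh b)`, which is the triangle inequality. -/

theorem Real.arcosh_le_arcosh_add_arcosh {a b c : ℝ} (ha : 1 ≤ a) (hb : 1 ≤ b) (hc : 0 < c)
    (h : (a * b - c) ^ 2 ≤ (a ^ 2 - 1) * (b ^ 2 - 1)) :
    Real.arcosh c ≤ Real.arcosh a + Real.arcosh b := by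
  have hsum_nonneg : 0 ≤ Real.arcosh a + Real.arcosh b :=
    add_nonneg (Real.arcosh_nonneg ha) (Real.arcosh_nonneg hb)
  have hc_le : c ≤ Real.cosh (Real.arcosh a + Real.arcosh b) := by
    have hab : -(a * b - c) ≤ √(a ^ 2 - 1) * √(b ^ 2 - 1) := by
      rw [← Real.sqrt_mul (by nlinarith)]
      exact (neg_le_abs _).trans (Real.abs_le_sqrt h)
    rw [Real.cosh_add, Real.cosh_arcosh ha, Real.cosh_arcosh hb, Real.sinh_arcosh ha,
      Real.sinh_arcosh hb]
    linarith
  calc Real.arcosh c ≤ Real.arcosh (Real.cosh (Real.arcosh a + Real.arcosh b)) :=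
        (Real.arcosh_le_arcosh hc (Real.cosh_pos _)).2 hc_le
    _ = Real.arcosh a + Real.arcosh b := Real.arcosh_cosh hsum_nonneg

section Lorentz

variable {n : ℕ}

lemma lprod_comm (x y : Fin (n + 1) → ℝ) : lprod x y = lprod y x :=
  Finset.sum_congr rfl fun _ _ => mul_right_comm _ _ _

lemma lprod_eq_neg_mul_add_sum (x y : Fin (n + 1) → ℝ) :
    lprod x y = -(x 0 * y 0) + ∑ i : Fin n, x i.succ * y i.succ := by
  simp [lprod, Fin.sum_univ_succ, Fin.succ_ne_zero]

lemma lprod_self_eq_neg_sq_add_sum (x : Fin (n + 1) → ℝ) :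
    lprod x x = -x 0 ^ 2 + ∑ i : Fin n, x i.succ ^ 2 := by
  simp only [lprod_eq_neg_mul_add_sum, sq]

lemma lprod_add_smul_left (x y z : Fin (n + 1) → ℝ) (a : ℝ) :
    lprod (x + a • y) z = lprod x z + a * lprod y z := by
  simp only [lprod, Pi.add_apply, Pi.smul_apply, smul_eq_mul, Finset.mul_sum,
    ← Finset.sum_add_distrib]
  exact Finset.sum_congr rfl fun _ _ => by ring

lemma lprod_add_smul_right (x y z : Fin (n + 1) → ℝ) (a : ℝ) :
    lprod z (x + a • y) = lprod z x + a * lprod z y := by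
  rw [lprod_comm, lprod_add_smul_left, lprod_comm x, lprod_comm y]

/-- The Lorentz-orthogonal projection onto `y⊥`, for `⟨y, y⟩_L = -1`. -/
def tangentProj (y x : Fin (n + 1) → ℝ) : Fin (n + 1) → ℝ := x + lprod x y • y

lemma lprod_tangentProj_left {y : Fin (n + 1) → ℝ} (hy : lprod y y = -1) (x : Fin (n + 1) → ℝ) :
    lprod (tangentProj y x) y = 0 := by
  rw [tangentProj, lprod_add_smul_left, hy]
  ring

lemma lprod_tangentProj {y : Fin (n + 1) → ℝ} (hy : lprod y y = -1) (x z : Fin (n + 1) → ℝ) :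
    lprod (tangentProj y x) (tangentProj y z) = lprod x z + lprod x y * lprod z y := by
  rw [tangentProj, tangentProj, lprod_add_smul_left, lprod_add_smul_right, lprod_add_smul_right,
    lprod_comm y z, hy]
  ring

lemma sum_sq_succ_le_mul_lprod_self {y v : Fin (n + 1) → ℝ} (hy : y ∈ Hyp n)
    (hv : lprod v y = 0) : ∑ i : Fin n, v i.succ ^ 2 ≤ y 0 ^ 2 * lprod v v := by
  have hy' := hy.1
  rw [lprod_self_eq_neg_sq_add_sum] at hy' ⊢
  rw [lprod_eq_neg_mul_add_sum] at hv
  have hcs := Finset.sum_mul_sq_le_sq_mul_sq Finset.univ (fun i : Fin n => v i.succ)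
    (fun i => y i.succ)
  have htime : (v 0 * y 0) ^ 2 = (∑ i : Fin n, v i.succ * y i.succ) ^ 2 := by
    rw [neg_add_eq_zero.1 hv]
  linear_combination hcs + htime + (∑ i : Fin n, v i.succ ^ 2) * hy'

lemma lprod_self_nonneg_of_lprod_eq_zero {y v : Fin (n + 1) → ℝ} (hy : y ∈ Hyp n)
    (hv : lprod v y = 0) : 0 ≤ lprod v v := by
  have hspace := sum_sq_succ_le_mul_lprod_self hy hv
  have hpos : 0 < y 0 ^ 2 := pow_pos hy.2 2
  have : 0 ≤ ∑ i : Fin n, v i.succ ^ 2 := Finset.sum_nonneg fun _ _ => sq_nonneg _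
  nlinarith

lemma eq_zero_of_lprod_eq_zero_of_lprod_self_eq_zero {y v : Fin (n + 1) → ℝ} (hy : y ∈ Hyp n)
    (hv : lprod v y = 0) (hvv : lprod v v = 0) : v = 0 := by
  have hspace : ∀ i : Fin n, v i.succ = 0 := by
    have := sum_sq_succ_le_mul_lprod_self hy hv
    rw [hvv, mul_zero] at this
    intro i
    exact pow_eq_zero_iff two_ne_zero |>.1 <|
      (Finset.sum_eq_zero_iff_of_nonneg fun _ _ => sq_nonneg _).1
        (this.antisymm (Finset.sum_nonneg fun _ _ => sq_nonneg _)) i (Finset.mem_univ i)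
  have htime : v 0 = 0 := by
    rw [lprod_eq_neg_mul_add_sum] at hv
    simp only [hspace, zero_mul, Finset.sum_const_zero, add_zero, neg_eq_zero] at hv
    exact (mul_eq_zero.1 hv).resolve_right hy.2.ne'
  funext i
  exact Fin.cases htime hspace i

lemma sq_lprod_le_of_lprod_eq_zero {y u w : Fin (n + 1) → ℝ} (hy : y ∈ Hyp n)
    (hu : lprod u y = 0) (hw : lprod w y = 0) :
    lprod u w ^ 2 ≤ lprod u u * lprod w w := by
  have hquad : ∀ t : ℝ, 0 ≤ lprod w w * (t * t) + 2 * lprod u w * t + lprod u u := by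
    intro t
    have horth : lprod (u + t • w) y = 0 := by rw [lprod_add_smul_left, hu, hw, mul_zero, add_zero]
    have := lprod_self_nonneg_of_lprod_eq_zero hy horth
    rw [lprod_add_smul_left, lprod_add_smul_right, lprod_add_smul_right, lprod_comm w u] at this
    linarith
  have := discrim_le_zero hquad
  rw [discrim] at this
  linarith

lemma neg_lprod_pos {x y : Fin (n + 1) → ℝ} (hx : x ∈ Hyp n) (hy : y ∈ Hyp n) :
    0 < -lprod x y := by
  have hx' := hx.1
  have hy' := hy.1
  rw [lprod_self_eq_neg_sq_add_sum] at hx' hy'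
  rw [lprod_eq_neg_mul_add_sum]
  have hcs := Finset.sum_mul_sq_le_sq_mul_sq Finset.univ (fun i : Fin n => x i.succ)
    (fun i => y i.succ)
  have hxy := mul_pos hx.2 hy.2
  nlinarith [Finset.sum_nonneg fun i (_ : i ∈ Finset.univ) => sq_nonneg (x (Fin.succ i)),
    Finset.sum_nonneg fun i (_ : i ∈ Finset.univ) => sq_nonneg (y (Fin.succ i))]

lemma one_le_neg_lprod {x y : Fin (n + 1) → ℝ} (hx : x ∈ Hyp n) (hy : y ∈ Hyp n) :
    1 ≤ -lprod x y := by
  have hproj := lprod_self_nonneg_of_lprod_eq_zero hy (lprod_tangentProj_left hy.1 x)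
  rw [lprod_tangentProj hy.1, hx.1] at hproj
  nlinarith [neg_lprod_pos hx hy]

lemma eq_of_neg_lprod_eq_one {x y : Fin (n + 1) → ℝ} (hx : x ∈ Hyp n) (hy : y ∈ Hyp n)
    (h : -lprod x y = 1) : x = y := by
  have hxy : lprod x y = -1 := by linarith
  have hproj : tangentProj y x = 0 := by
    refine eq_zero_of_lprod_eq_zero_of_lprod_self_eq_zero hy (lprod_tangentProj_left hy.1 x) ?_
    rw [lprod_tangentProj hy.1, hx.1, hxy]
    norm_num
  rw [tangentProj, hxy, neg_one_smul, add_neg_eq_zero] at hproj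
  exact hproj

lemma sq_neg_lprod_mul_sub_le {x y z : Fin (n + 1) → ℝ}
    (hx : x ∈ Hyp n) (hy : y ∈ Hyp n) (hz : z ∈ Hyp n) :
    ((-lprod x y) * (-lprod y z) - (-lprod x z)) ^ 2 ≤
      ((-lprod x y) ^ 2 - 1) * ((-lprod y z) ^ 2 - 1) := by
  have hcs := sq_lprod_le_of_lprod_eq_zero hy (lprod_tangentProj_left hy.1 x)
    (lprod_tangentProj_left hy.1 z)
  rw [lprod_tangentProj hy.1, lprod_tangentProj hy.1, lprod_tangentProj hy.1, hx.1, hz.1,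
    lprod_comm z y] at hcs
  linarith

end Lorentz

lemma dL_eq_arcosh {n : ℕ} (x y : Fin (n + 1) → ℝ) : dL x y = Real.arcosh (-lprod x y) := rfl

/-- d_𝕃 is a metric on 𝕃ⁿ. -/
theorem dL_is_metric {n : ℕ} (x y z : Fin (n + 1) → ℝ)
    (hx : x ∈ Hyp n) (hy : y ∈ Hyp n) (hz : z ∈ Hyp n) :
    0 ≤ dL x y ∧ (dL x y = 0 ↔ x = y) ∧ dL x y = dL y x ∧ dL x z ≤ dL x y + dL y z := by
  have hxy := one_le_neg_lprod hx hy
  refine ⟨Real.arcosh_nonneg hxy, ?_, by rw [dL, dL, lprod_comm], ?_⟩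
  · rw [dL_eq_arcosh, Real.arcosh_eq_zero_iff hxy]
    refine ⟨eq_of_neg_lprod_eq_one hx hy, ?_⟩
    rintro rfl
    rw [hx.1, neg_neg]
  · simp only [dL_eq_arcosh]
    exact Real.arcosh_le_arcosh_add_arcosh hxy (one_le_neg_lprod hy hz)
      (neg_lprod_pos hx hz) (sq_neg_lprod_mul_sub_le hx hy hz)
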